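/- arXiv:2002.03653 — 6 statements merged into one kernel-verified Lean document; each statement's English description precedes it below -/
import Mathlib

section
/- Let α : ℝ → X be an (L,C)-quasi-geodesic in a geodesic metric space X which is also (A,D)-contracting, i.e., there is a map π : X → α with: (1) d(π(x₁), π(x₂)) ≤ D·d(x₁,x₂) + D for all x₁, x₂ ∈ X; (2) d(y, π(y)) ≤ D for all y on the image of α; (3) for all x ∈ X, diam(π(B(x, A·d(x, im α)))) ≤ D. Then for all x ∈ X, d(x, π(x)) ≤ 2D·d(x, im α) + 4D. -/
/-- A geodesic metric space: any two points are joined by a geodesic segment. -/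
def GeodesicSpace (X : Type*) [MetricSpace X] : Prop :=
  ∀ x y : X, ∃ g : ℝ → X, g 0 = x ∧ g (dist x y) = y ∧
    ∀ s ∈ Set.Icc (0 : ℝ) (dist x y), ∀ t ∈ Set.Icc (0 : ℝ) (dist x y),
      dist (g s) (g t) = |s - t|

/-- `α : ℝ → X` is an `(L,C)`-quasi-geodesic. -/
def IsQuasiGeodesic {X : Type*} [MetricSpace X] (L C : ℝ) (α : ℝ → X) : Prop :=
  ∀ s t : ℝ, (1 / L) * |s - t| - C ≤ dist (α s) (α t) ∧
    dist (α s) (α t) ≤ L * |s - t| + C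

/-- If `α` is an `(L,C)`-quasi-geodesic which is `(A,D)`-contracting via the map `π`,
then for all `x`, `d(x, π x) ≤ 2·D·d(x, im α) + 4·D`. -/
theorem dist_to_contracting_projection {X : Type*} [MetricSpace X]
    (hgeo : GeodesicSpace X) (L C A D : ℝ) (hL : 1 ≤ L) (hC : 0 ≤ C)
    (hA0 : 0 < A) (hA1 : A < 1) (hD : 1 ≤ D)
    (α : ℝ → X) (hα : IsQuasiGeodesic L C α)
    (π : X → X) (hπrange : ∀ x : X, π x ∈ Set.range α)
    (hπlip : ∀ x₁ x₂ : X, dist (π x₁) (π x₂) ≤ D * dist x₁ x₂ + D)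
    (hπnear : ∀ y ∈ Set.range α, dist y (π y) ≤ D)
    (hπcontr : ∀ x : X,
      Metric.diam (π '' Metric.ball x (A * Metric.infDist x (Set.range α))) ≤ D) :
    ∀ x : X, dist x (π x) ≤ 2 * D * Metric.infDist x (Set.range α) + 4 * D := by
  intro x
  set S := Set.range α with hS
  have hne : S.Nonempty := ⟨α 0, 0, rfl⟩
  set δ := Metric.infDist x S with hδ
  have hδ0 : 0 ≤ δ := Metric.infDist_nonneg
  have hlt : Metric.infDist x S < δ + 1 := by linarith
  obtain ⟨y, hyS, hxy⟩ := (Metric.infDist_lt_iff hne).mp hlt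
  have h1 : dist y (π y) ≤ D := hπnear y hyS
  have h2 : dist (π y) (π x) ≤ D * dist y x + D := hπlip y x
  have h3 : dist x (π x) ≤ dist x y + dist y (π y) + dist (π y) (π x) :=
    dist_triangle4 x y (π y) (π x)
  have hyx : dist y x < δ + 1 := by rwa [dist_comm]
  have hD0 : (0:ℝ) ≤ D := by linarith
  nlinarith [mul_le_mul_of_nonneg_left hyx.le hD0]
end

section
/- Let α : ℝ → X be an (L,C)-quasi-geodesic (L ≥ 1, C ≥ 0) in a geodesic metric space X, let D ≥ 1, and let r > 4L³(C+1) + 4LC. Set s = r/((8L³+4L)(6D+4)). Then for every rectifiable path γ from α(−r) to α(r) lying outside the open ball B(α(0), r/L − C), there exist points x and y on γ such that d(x, im α) = d(y, im α) = s, d(x,y) ≥ 6Ds, and the subpath of γ between x and y lies outside the open s-neighborhood of im α. -/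
set_option maxHeartbeats 1000000 in
/-- For an `(L,C)`-quasi-geodesic `α`, `D ≥ 1`, `r > 4L³(C+1) + 4LC` and
`s = r/((8L³+4L)(6D+4))`: every rectifiable path `γ` from `α(-r)` to `α(r)` staying
outside the open ball `B(α 0, r/L - C)` contains points `x = γ t₁`, `y = γ t₂` with
`d(x, im α) = d(y, im α) = s`, `d(x,y) ≥ 6Ds`, and the subpath of `γ` between them
outside the open `s`-neighborhood of `im α`. -/
theorem exists_far_points_on_avoidant_path {X : Type*} [MetricSpace X]
    (hgeo : GeodesicSpace X) (L C D r s : ℝ) (hL : 1 ≤ L) (hC : 0 ≤ C) (hD : 1 ≤ D)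
    (hr : 4 * L ^ 3 * (C + 1) + 4 * L * C < r)
    (hs : s = r / ((8 * L ^ 3 + 4 * L) * (6 * D + 4)))
    (α : ℝ → X) (hα : IsQuasiGeodesic L C α)
    (a b : ℝ) (hab : a ≤ b) (γ : ℝ → X) (hγcont : ContinuousOn γ (Set.Icc a b))
    (hγrect : eVariationOn γ (Set.Icc a b) ≠ ⊤)
    (hγa : γ a = α (-r)) (hγb : γ b = α r)
    (hγavoid : ∀ t ∈ Set.Icc a b, r / L - C ≤ dist (γ t) (α 0)) :
    ∃ t₁ ∈ Set.Icc a b, ∃ t₂ ∈ Set.Icc a b, t₁ ≤ t₂ ∧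
      Metric.infDist (γ t₁) (Set.range α) = s ∧
      Metric.infDist (γ t₂) (Set.range α) = s ∧
      6 * D * s ≤ dist (γ t₁) (γ t₂) ∧
      ∀ t ∈ Set.Icc t₁ t₂, s ≤ Metric.infDist (γ t) (Set.range α) := by
  by_contra hcon
  push_neg at hcon
  -- basic positivity facts
  have hL0 : (0:ℝ) < L := lt_of_lt_of_le one_pos hL
  have hD0 : (0:ℝ) < D := lt_of_lt_of_le one_pos hD
  have hr0 : (0:ℝ) < r := by
    nlinarith [pow_pos hL0 3, mul_nonneg (pow_pos hL0 3).le hC, mul_nonneg hL0.le hC]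
  have hE0 : (0:ℝ) < (8 * L ^ 3 + 4 * L) * (6 * D + 4) := by nlinarith [pow_pos hL0 3]
  have hs0 : (0:ℝ) < s := by rw [hs]; exact div_pos hr0 hE0
  have hsE : s * (48*D*L^3 + 32*L^3 + 24*D*L + 16*L) = r := by
    rw [hs, div_mul_eq_mul_div, div_eq_iff hE0.ne']; ring
  have hne : (Set.range α).Nonempty := ⟨α 0, 0, rfl⟩
  have h6Ds : (0:ℝ) < 6 * D * s := by nlinarith [mul_pos hD0 hs0]
  -- the cutoff constant c
  set c : ℝ := L * (6*D*s + 2*s + 1 + C) / 2 with hcdef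
  have hc0 : (0:ℝ) < c := by
    rw [hcdef]; nlinarith [mul_pos hD0 hs0, mul_pos hL0 (show (0:ℝ) < 6*D*s + 2*s + 1 + C by nlinarith [mul_pos hD0 hs0])]
  -- main numeric inequality
  have hL3 : L ≤ L ^ 3 := by nlinarith [sq_nonneg (L - 1), sq_nonneg L]
  have hN1 : L * c + s + 1 + 2 * C ≤ r / L := by
    rw [le_div_iff₀ hL0]
    have hexp : (L * c + s + 1 + 2 * C) * L
        = 3*D*L^3*s + L^3*s + C*L^3/2 + L^3/2 + L*s + L + 2*C*L := by
      rw [hcdef]; ring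
    rw [hexp]
    have hCL3 : C * L ≤ C * L ^ 3 := mul_le_mul_of_nonneg_left hL3 hC
    have m1 : 15/16 * r ≤ 45*D*L^3*s + 31*L^3*s + 24*D*L*s + 15*L*s := by
      nlinarith [hsE, mul_pos (pow_pos hL0 3) hs0, mul_pos (mul_pos hD0 hL0) hs0]
    have m3 : C*L^3/2 + L^3/2 + L + 2*C*L ≤ 15/16 * (4*L^3*C + 4*L^3 + 4*L*C) := by
      nlinarith [hCL3, hL3]
    have m2 : 15/16 * (4*L^3*C + 4*L^3 + 4*L*C) < 15/16 * r := by nlinarith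
    nlinarith [hsE]
  have hcr : c ≤ r := by
    have h1 : c ≤ L * c := by nlinarith [mul_nonneg (sub_nonneg.2 hL) hc0.le]
    have h3 : r / L ≤ r := div_le_self hr0.le hL
    linarith
  -- continuity, packaged
  have hγc : ∀ t ∈ Set.Icc a b, ∀ ε > 0, ∃ δ > 0, ∀ y ∈ Set.Icc a b,
      dist y t < δ → dist (γ y) (γ t) < ε := by
    intro t ht ε hε
    obtain ⟨δ, h0, h⟩ := Metric.continuousWithinAt_iff.1 (hγcont t ht) ε hε
    exact ⟨δ, h0, fun y hy hd => h hy hd⟩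
  have hfcOn : ContinuousOn (fun t => Metric.infDist (γ t) (Set.range α)) (Set.Icc a b) :=
    (Metric.continuous_infDist_pt (Set.range α)).comp_continuousOn hγcont
  have hfc : ∀ t ∈ Set.Icc a b, ∀ ε > 0, ∃ δ > 0, ∀ y ∈ Set.Icc a b, dist y t < δ →
      |Metric.infDist (γ y) (Set.range α) - Metric.infDist (γ t) (Set.range α)| < ε := by
    intro t ht ε hε
    obtain ⟨δ, h0, h⟩ := Metric.continuousWithinAt_iff.1 (hfcOn t ht) ε hε
    exact ⟨δ, h0, fun y hy hd => by simpa [Real.dist_eq] using h hy hd⟩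
  have hfa : Metric.infDist (γ a) (Set.range α) = 0 := by
    rw [hγa]; exact Metric.infDist_zero_of_mem ⟨-r, rfl⟩
  have hfb : Metric.infDist (γ b) (Set.range α) = 0 := by
    rw [hγb]; exact Metric.infDist_zero_of_mem ⟨r, rfl⟩
  -- middle exclusion lemma
  have hMID : ∀ t ∈ Set.Icc a b, ∀ u : ℝ, dist (γ t) (α u) ≤ s + 1/4 → c < |u| := by
    intro t ht u hdu
    by_contra hle
    push_neg at hle
    have h1 := hγavoid t ht
    have h2 := (hα u 0).2
    rw [sub_zero] at h2
    have h3 : dist (γ t) (α 0) ≤ dist (γ t) (α u) + dist (α u) (α 0) := dist_triangle _ _ _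
    have hLu : L * |u| ≤ L * c := mul_le_mul_of_nonneg_left hle hL0.le
    linarith
  -- opposite-sides lemma
  have hOPP : ∀ u u' t t' : ℝ, u ≤ -c → c ≤ u' → dist (γ t) (α u) ≤ s + 1/2 →
      dist (γ t') (α u') ≤ s + 1/2 → dist (γ t) (γ t') < 6*D*s → False := by
    intro u u' t t' hu hu' h1 h2 h3
    have hq := (hα u u').1
    have habs : 2 * c ≤ |u - u'| := by
      have h4 : u' - u ≤ |u' - u| := le_abs_self _
      rw [abs_sub_comm] at h4
      linarith
    have hmono : (1/L) * (2*c) ≤ (1/L) * |u - u'| :=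
      mul_le_mul_of_nonneg_left habs (one_div_nonneg.2 hL0.le)
    have hkey : (1/L) * (2*c) = 6*D*s + 2*s + 1 + C := by
      rw [hcdef]; field_simp
    have htri : dist (α u) (α u') ≤ dist (α u) (γ t) + dist (γ t) (γ t') + dist (γ t') (α u') :=
      dist_triangle4 _ _ _ _
    rw [dist_comm (α u) (γ t)] at htri
    linarith
  -- the set Neg
  set Neg : Set ℝ := {t | t ∈ Set.Icc a b ∧ Metric.infDist (γ t) (Set.range α) ≤ s ∧
    ∀ ε > 0, ∃ u, u ≤ -c ∧ dist (γ t) (α u) < s + ε} with hNegdef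
  have hNegmem : ∀ t : ℝ, t ∈ Neg ↔ (t ∈ Set.Icc a b ∧ Metric.infDist (γ t) (Set.range α) ≤ s ∧
      ∀ ε > 0, ∃ u, u ≤ -c ∧ dist (γ t) (α u) < s + ε) := fun t => Iff.rfl
  -- membership criterion for Neg
  have hNEGMEM : ∀ t ∈ Set.Icc a b, Metric.infDist (γ t) (Set.range α) ≤ s →
      ∀ u₀ : ℝ, u₀ ≤ -c → dist (γ t) (α u₀) ≤ s + 1/2 → t ∈ Neg := by
    intro t ht hft u₀ hu₀ hd₀
    refine (hNegmem t).2 ⟨ht, hft, ?_⟩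
    intro ε hε
    have hε' : (0:ℝ) < min ε (1/4) := lt_min hε (by norm_num)
    have hlt : Metric.infDist (γ t) (Set.range α) < s + min ε (1/4) := by linarith
    obtain ⟨y, ⟨u, rfl⟩, hy⟩ := (Metric.infDist_lt_iff hne).1 hlt
    have hy4 : dist (γ t) (α u) ≤ s + 1/4 := by
      have : min ε (1/4) ≤ 1/4 := min_le_right _ _
      linarith
    have hside := hMID t ht u hy4
    rcases lt_abs.1 hside with h | h
    · exact absurd (hOPP u₀ u t t hu₀ h.le hd₀ (by linarith)
        (by rw [dist_self]; exact h6Ds)) not_false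
    · refine ⟨u, by linarith, ?_⟩
      have : min ε (1/4) ≤ ε := min_le_left _ _
      linarith
  -- side lemma
  have hSIDE : ∀ t ∈ Set.Icc a b, Metric.infDist (γ t) (Set.range α) ≤ s → t ∉ Neg →
      ∃ u', c ≤ u' ∧ dist (γ t) (α u') ≤ s + 1/2 := by
    intro t ht hft htn
    have hlt : Metric.infDist (γ t) (Set.range α) < s + 1/4 := by linarith
    obtain ⟨y, ⟨u, rfl⟩, hy⟩ := (Metric.infDist_lt_iff hne).1 hlt
    have hside := hMID t ht u hy.le
    rcases lt_abs.1 hside with h | h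
    · exact ⟨u, h.le, by linarith⟩
    · exact absurd (hNEGMEM t ht hft u (by linarith) (by linarith)) htn
  -- a ∈ Neg
  have haNeg : a ∈ Neg := by
    refine hNEGMEM a ⟨le_refl a, hab⟩ (by rw [hfa]; exact hs0.le) (-r) (by linarith) ?_
    rw [hγa, dist_self]; linarith
  have hNegne : Neg.Nonempty := ⟨a, haNeg⟩
  have hNegbdd : BddAbove Neg := ⟨b, fun x hx => ((hNegmem x).1 hx).1.2⟩
  set τ : ℝ := sSup Neg with hτdef
  have hτa : a ≤ τ := le_csSup hNegbdd haNeg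
  have hτb : τ ≤ b := csSup_le hNegne fun x hx => ((hNegmem x).1 hx).1.2
  have hτIcc : τ ∈ Set.Icc a b := ⟨hτa, hτb⟩
  -- the closed set K
  have hKcl : IsClosed (Set.Icc a b ∩ (fun t => Metric.infDist (γ t) (Set.range α)) ⁻¹' Set.Iic s) :=
    hfcOn.preimage_isClosed_of_isClosed isClosed_Icc isClosed_Iic
  have hτclosure : τ ∈ closure Neg := csSup_mem_closure hNegne hNegbdd
  have hfτle : Metric.infDist (γ τ) (Set.range α) ≤ s := by
    have hsub : Neg ⊆ Set.Icc a b ∩ (fun t => Metric.infDist (γ t) (Set.range α)) ⁻¹' Set.Iic s :=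
      fun x hx => ⟨((hNegmem x).1 hx).1, ((hNegmem x).1 hx).2.1⟩
    exact (closure_minimal hsub hKcl hτclosure).2
  -- τ ∈ Neg
  have hτNeg : τ ∈ Neg := by
    refine (hNegmem τ).2 ⟨hτIcc, hfτle, ?_⟩
    intro ε hε
    obtain ⟨δ, hδ0, hδ⟩ := hγc τ hτIcc (ε/2) (by linarith)
    obtain ⟨t, htNeg, hdistτ⟩ := Metric.mem_closure_iff.1 hτclosure δ hδ0
    obtain ⟨htIcc, -, hprop⟩ := (hNegmem t).1 htNeg
    have h1 : dist (γ t) (γ τ) < ε/2 := hδ t htIcc (by rw [dist_comm]; exact hdistτ)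
    obtain ⟨u, hu, hdu⟩ := hprop (ε/2) (by linarith)
    refine ⟨u, hu, ?_⟩
    calc dist (γ τ) (α u) ≤ dist (γ τ) (γ t) + dist (γ t) (α u) := dist_triangle _ _ _
      _ < ε/2 + (s + ε/2) := by rw [dist_comm (γ τ) (γ t)]; exact add_lt_add h1 hdu
      _ = s + ε := by ring
  -- b ∉ Neg, hence τ < b
  have hbNeg : b ∉ Neg := by
    intro hb
    obtain ⟨u, hu, hdu⟩ := ((hNegmem b).1 hb).2.2 (1/4) (by norm_num)
    rw [hγb] at hdu
    have hq := (hα r u).1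
    have h1 : r + c ≤ |r - u| := by
      have h4 : r - u ≤ |r - u| := le_abs_self _
      linarith
    have h2 : (1/L) * (r + c) ≤ (1/L) * |r - u| :=
      mul_le_mul_of_nonneg_left h1 (one_div_nonneg.2 hL0.le)
    have h3 : (1/L) * (r + c) = r/L + c/L := by ring
    have h4 : (0:ℝ) ≤ c/L := div_nonneg hc0.le hL0.le
    have h5 : (0:ℝ) ≤ L * c := (mul_pos hL0 hc0).le
    linarith
  have hτltb : τ < b := lt_of_le_of_ne hτb fun h => hbNeg (h ▸ hτNeg)
  -- case split
  by_cases hcase : ∀ δ > 0, ∃ t, t ∈ Set.Icc a b ∧ τ < t ∧ t ≤ τ + δ ∧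
      Metric.infDist (γ t) (Set.range α) ≤ s
  · -- case 1: points of small infDist accumulate at τ from the right
    obtain ⟨δ, hδ0, hδ⟩ := hγc τ hτIcc (6*D*s) h6Ds
    obtain ⟨t, htIcc, hτt, htδ, hft⟩ := hcase (δ/2) (by linarith)
    have htdist : dist t τ < δ := by
      rw [Real.dist_eq, abs_of_pos (by linarith : (0:ℝ) < t - τ)]; linarith
    have hgd : dist (γ t) (γ τ) < 6*D*s := hδ t htIcc htdist
    have htnotNeg : t ∉ Neg := fun hmem => absurd (le_csSup hNegbdd hmem) (not_le.2 hτt)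
    obtain ⟨u', hu', hdu'⟩ := hSIDE t htIcc hft htnotNeg
    obtain ⟨u, hu, hdu⟩ := ((hNegmem τ).1 hτNeg).2.2 (1/2) (by norm_num)
    exact hOPP u u' τ t hu hu' hdu.le hdu' (by rw [dist_comm]; exact hgd)
  · -- case 2: an excursion above level s starts at τ
    push_neg at hcase
    obtain ⟨δ, hδ0, hδ⟩ := hcase
    have hfτge : s ≤ Metric.infDist (γ τ) (Set.range α) := by
      by_contra hlt
      push_neg at hlt
      obtain ⟨δ₃, hδ₃0, hδ₃⟩ := hfc τ hτIcc (s - Metric.infDist (γ τ) (Set.range α)) (by linarith)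
      set y := min (τ + δ) (min (τ + δ₃/2) b) with hydef
      have hyτ : τ < y := lt_min (by linarith) (lt_min (by linarith) hτltb)
      have hy1 : y ≤ τ + δ := min_le_left _ _
      have hy2 : y ≤ τ + δ₃/2 := le_trans (min_le_right _ _) (min_le_left _ _)
      have hyb : y ≤ b := le_trans (min_le_right _ _) (min_le_right _ _)
      have hyIcc : y ∈ Set.Icc a b := ⟨hτa.trans hyτ.le, hyb⟩
      have hdy : dist y τ < δ₃ := by
        rw [Real.dist_eq, abs_of_pos (by linarith : (0:ℝ) < y - τ)]; linarith
      have h7 := hδ₃ y hyIcc hdy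
      have hfy : Metric.infDist (γ y) (Set.range α) < s := by
        have := (abs_lt.1 h7).2; linarith
      exact absurd hfy (not_lt.2 (hδ y hyIcc hyτ hy1).le)
    have hfτs : Metric.infDist (γ τ) (Set.range α) = s := le_antisymm hfτle hfτge
    set S : Set ℝ := {t | t ∈ Set.Icc a b ∧ τ < t ∧ Metric.infDist (γ t) (Set.range α) ≤ s}
      with hSdef
    have hSmem : ∀ t : ℝ, t ∈ S ↔ (t ∈ Set.Icc a b ∧ τ < t ∧
        Metric.infDist (γ t) (Set.range α) ≤ s) := fun t => Iff.rfl
    have hbS : b ∈ S := (hSmem b).2 ⟨⟨hab, le_refl b⟩, hτltb, by rw [hfb]; exact hs0.le⟩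
    have hSne : S.Nonempty := ⟨b, hbS⟩
    have hSbdd : BddBelow S := ⟨a, fun x hx => ((hSmem x).1 hx).1.1⟩
    set t₂ : ℝ := sInf S with ht₂def
    have ht₂b : t₂ ≤ b := csInf_le hSbdd hbS
    have ht₂a : a ≤ t₂ := le_csInf hSne fun x hx => ((hSmem x).1 hx).1.1
    have ht₂Icc : t₂ ∈ Set.Icc a b := ⟨ht₂a, ht₂b⟩
    have hτδt₂ : τ + δ ≤ t₂ := by
      refine le_csInf hSne fun x hx => ?_
      obtain ⟨hx1, hx2, hx3⟩ := (hSmem x).1 hx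
      by_contra h
      push_neg at h
      exact absurd hx3 (not_le.2 (hδ x hx1 hx2 h.le))
    have hτt₂ : τ < t₂ := lt_of_lt_of_le (by linarith) hτδt₂
    have hft₂le : Metric.infDist (γ t₂) (Set.range α) ≤ s := by
      have hsub : S ⊆ Set.Icc a b ∩ (fun t => Metric.infDist (γ t) (Set.range α)) ⁻¹' Set.Iic s :=
        fun x hx => ⟨((hSmem x).1 hx).1, ((hSmem x).1 hx).2.2⟩
      exact (closure_minimal hsub hKcl (csInf_mem_closure hSne hSbdd)).2
    have hft₂ge : s ≤ Metric.infDist (γ t₂) (Set.range α) := by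
      by_contra hlt
      push_neg at hlt
      obtain ⟨δ₂, hδ₂0, hδ₂⟩ := hfc t₂ ht₂Icc (s - Metric.infDist (γ t₂) (Set.range α)) (by linarith)
      set y := max (t₂ - δ₂/2) ((τ + t₂)/2) with hydef
      have hyτ : τ < y := lt_of_lt_of_le (by linarith : τ < (τ + t₂)/2) (le_max_right _ _)
      have hyt₂ : y < t₂ := max_lt (by linarith) (by linarith)
      have hyIcc : y ∈ Set.Icc a b := ⟨hτa.trans hyτ.le, hyt₂.le.trans ht₂b⟩
      have hdy : dist y t₂ < δ₂ := by
        rw [Real.dist_eq, abs_of_nonpos (by linarith [le_max_left (t₂ - δ₂/2) ((τ + t₂)/2)] :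
          y - t₂ ≤ 0)]
        have := le_max_left (t₂ - δ₂/2) ((τ + t₂)/2)
        linarith
      have h7 := hδ₂ y hyIcc hdy
      have hfy : Metric.infDist (γ y) (Set.range α) < s := by
        have := (abs_lt.1 h7).2; linarith
      have hyS : y ∈ S := (hSmem y).2 ⟨hyIcc, hyτ, hfy.le⟩
      exact absurd (csInf_le hSbdd hyS) (not_le.2 hyt₂)
    have hft₂s : Metric.infDist (γ t₂) (Set.range α) = s := le_antisymm hft₂le hft₂ge
    have hmid : ∀ t ∈ Set.Icc τ t₂, s ≤ Metric.infDist (γ t) (Set.range α) := by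
      intro t ht
      obtain ⟨h1, h2⟩ := ht
      rcases eq_or_lt_of_le h1 with heq | h1'
      · rw [← heq]; exact hfτge
      rcases eq_or_lt_of_le h2 with heq2 | h2'
      · rw [heq2]; exact hft₂ge
      by_contra h
      push_neg at h
      have htIcc : t ∈ Set.Icc a b := ⟨hτa.trans h1, h2.trans ht₂b⟩
      have htS : t ∈ S := (hSmem t).2 ⟨htIcc, h1', h.le⟩
      exact absurd (csInf_le hSbdd htS) (not_le.2 h2')
    have hdist : dist (γ τ) (γ t₂) < 6*D*s := by
      by_contra hge
      push_neg at hge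
      obtain ⟨t, htmem, hlt⟩ := hcon τ hτIcc t₂ ht₂Icc hτt₂.le hfτs hft₂s hge
      exact absurd hlt (not_lt.2 (hmid t htmem))
    have ht₂notNeg : t₂ ∉ Neg := fun hmem => absurd (le_csSup hNegbdd hmem) (not_le.2 hτt₂)
    obtain ⟨u', hu', hdu'⟩ := hSIDE t₂ ht₂Icc hft₂le ht₂notNeg
    obtain ⟨u, hu, hdu⟩ := ((hNegmem τ).1 hτNeg).2.2 (1/2) (by norm_num)
    exact hOPP u u' τ t₂ hu hu' hdu.le hdu' hdist
end

section
/- Let α : ℝ → X be an (L,C)-quasi-geodesic in a geodesic metric space X that is also (A,D)-contracting. Then the divergence of α is at least quadratic: there is a constant K > 0 (explicitly K = A/(4(8L³+4L)²(6D+4)²)) and R₀ such that for all r > R₀, every rectifiable path connecting α(−r) to α(r) and avoiding the open ball B(α(0), r/L − C) has length at least K·r². -/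
/-- Chain lemma: along a continuous path staying at `infDist ≥ c/A` from `I`,
if the projections of the endpoints are at distance more than `(n+1)D`, then the
variation of the path is at least `n * c / 2`. -/
lemma chain_lemma {X : Type*} [MetricSpace X] (π : X → X) (I : Set X)
    (A D c : ℝ) (hD : 0 ≤ D) (hc : 0 < c)
    (hπlip : ∀ x₁ x₂ : X, dist (π x₁) (π x₂) ≤ D * dist x₁ x₂ + D)
    (hπcontr : ∀ x : X, Metric.diam (π '' Metric.ball x (A * Metric.infDist x I)) ≤ D) :
    ∀ n : ℕ, ∀ (γ : ℝ → X) (p u : ℝ), p ≤ u → ContinuousOn γ (Set.Icc p u) →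
      (∀ t ∈ Set.Icc p u, c ≤ A * Metric.infDist (γ t) I) →
      ((n : ℝ) + 1) * D < dist (π (γ p)) (π (γ u)) →
      ENNReal.ofReal ((n : ℝ) * (c / 2)) ≤ eVariationOn γ (Set.Icc p u) := by
  intro n
  induction n with
  | zero => intro γ p u hpu hcont hinf hdist; simp
  | succ n ih =>
    intro γ p u hpu hcont hinf hdist
    push_cast at hdist
    have hpmem : p ∈ Set.Icc p u := ⟨le_refl p, hpu⟩
    have hcp : c ≤ A * Metric.infDist (γ p) I := hinf p hpmem
    -- the projection moves points of the ball `B(γ p, c)` by at most `D`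
    have hnearD : ∀ y : X, dist (γ p) y < c → dist (π (γ p)) (π y) ≤ D := by
      intro y hy
      set ρ := A * Metric.infDist (γ p) I with hρ
      have h0 : (0 : ℝ) < ρ := lt_of_lt_of_le hc hcp
      have hxball : γ p ∈ Metric.ball (γ p) ρ := by simpa [Metric.mem_ball] using h0
      have hyball : y ∈ Metric.ball (γ p) ρ := by
        rw [Metric.mem_ball, dist_comm]; exact lt_of_lt_of_le hy hcp
      have hbdd : Bornology.IsBounded (π '' Metric.ball (γ p) ρ) := by
        apply (Metric.isBounded_closedBall (x := π (γ p)) (r := D * ρ + D)).subset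
        rintro _ ⟨z, hz, rfl⟩
        rw [Metric.mem_closedBall, dist_comm]
        have h1 := hπlip (γ p) z
        have hzd : dist (γ p) z ≤ ρ := le_of_lt (by simpa [Metric.mem_ball, dist_comm] using hz)
        nlinarith [dist_nonneg (x := γ p) (y := z)]
      calc dist (π (γ p)) (π y)
          ≤ Metric.diam (π '' Metric.ball (γ p) ρ) :=
            Metric.dist_le_diam_of_mem hbdd (Set.mem_image_of_mem _ hxball)
              (Set.mem_image_of_mem _ hyball)
        _ ≤ D := hπcontr (γ p)
    -- the endpoints of the path are at distance at least c
    have hfu : c ≤ dist (γ p) (γ u) := by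
      by_contra h
      push_neg at h
      have h1 := hnearD (γ u) h
      have hn0 : (0 : ℝ) ≤ (n : ℝ) := Nat.cast_nonneg n
      nlinarith
    -- intermediate value: find w with dist (γ p) (γ w) = c/2
    have hcont' : ContinuousOn (fun t => dist (γ p) (γ t)) (Set.Icc p u) :=
      (continuous_const.dist continuous_id).comp_continuousOn hcont
    have hivt := intermediate_value_Icc hpu hcont'
    have hmem2 : c / 2 ∈ Set.Icc (dist (γ p) (γ p)) (dist (γ p) (γ u)) := by
      rw [dist_self]
      constructor <;> [linarith; linarith]
    obtain ⟨w, hw, hweq'⟩ := hivt hmem2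
    have hweq : dist (γ p) (γ w) = c / 2 := hweq'
    have h1 : dist (π (γ p)) (π (γ w)) ≤ D := hnearD _ (by rw [hweq]; linarith)
    have h2 : ((n : ℝ) + 1) * D < dist (π (γ w)) (π (γ u)) := by
      have h3 := dist_triangle (π (γ p)) (π (γ w)) (π (γ u))
      linarith
    have hIH := ih γ w u hw.2 (hcont.mono (Set.Icc_subset_Icc hw.1 le_rfl))
      (fun t ht => hinf t ⟨le_trans hw.1 ht.1, ht.2⟩) h2
    have hvar1 : ENNReal.ofReal (c / 2) ≤ eVariationOn γ (Set.Icc p w) := by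
      rw [← hweq, ← edist_dist]
      exact eVariationOn.edist_le γ ⟨le_refl p, hw.1⟩ ⟨hw.1, le_refl w⟩
    have hadd := eVariationOn.Icc_add_Icc γ (s := Set.univ) hw.1 hw.2 (Set.mem_univ w)
    simp only [Set.univ_inter] at hadd
    calc ENNReal.ofReal ((↑(n + 1) : ℝ) * (c / 2))
        = ENNReal.ofReal (c / 2 + (n : ℝ) * (c / 2)) := by push_cast; ring_nf
      _ = ENNReal.ofReal (c / 2) + ENNReal.ofReal ((n : ℝ) * (c / 2)) := by
          rw [ENNReal.ofReal_add (by positivity)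
            (mul_nonneg (Nat.cast_nonneg n) (by linarith))]
      _ ≤ eVariationOn γ (Set.Icc p w) + eVariationOn γ (Set.Icc w u) := add_le_add hvar1 hIH
      _ = eVariationOn γ (Set.Icc p u) := hadd

set_option maxHeartbeats 2000000 in
/-- A contracting quasi-geodesic has at least quadratic divergence: with
`K = A/(4(8L³+4L)²(6D+4)²)` and `R₀ = 4L³(C+1)+4LC+8(8L³+4L)(6D+4)`, for all `r > R₀`
every rectifiable path from `α(-r)` to `α(r)` avoiding the open ball `B(α 0, r/L - C)`
has length at least `K·r²`. -/
theorem contracting_divergence_quadratic {X : Type*} [MetricSpace X]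
    (hgeo : GeodesicSpace X) (L C A D : ℝ) (hL : 1 ≤ L) (hC : 0 ≤ C)
    (hA0 : 0 < A) (hA1 : A < 1) (hD : 1 ≤ D)
    (α : ℝ → X) (hα : IsQuasiGeodesic L C α)
    (π : X → X) (hπrange : ∀ x : X, π x ∈ Set.range α)
    (hπlip : ∀ x₁ x₂ : X, dist (π x₁) (π x₂) ≤ D * dist x₁ x₂ + D)
    (hπnear : ∀ y ∈ Set.range α, dist y (π y) ≤ D)
    (hπcontr : ∀ x : X,
      Metric.diam (π '' Metric.ball x (A * Metric.infDist x (Set.range α))) ≤ D) :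
    ∀ r : ℝ, 4 * L ^ 3 * (C + 1) + 4 * L * C + 8 * (8 * L ^ 3 + 4 * L) * (6 * D + 4) < r →
      ∀ a b : ℝ, a ≤ b → ∀ γ : ℝ → X, ContinuousOn γ (Set.Icc a b) →
        γ a = α (-r) → γ b = α r →
        (∀ t ∈ Set.Icc a b, r / L - C ≤ dist (γ t) (α 0)) →
        ENNReal.ofReal (A / (4 * (8 * L ^ 3 + 4 * L) ^ 2 * (6 * D + 4) ^ 2) * r ^ 2) ≤
          eVariationOn γ (Set.Icc a b) := by
  intro r hr a b hab γ hγ hγa hγb havoid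
  have hL0 : (0 : ℝ) < L := lt_of_lt_of_le one_pos hL
  have hD0 : (0 : ℝ) < D := lt_of_lt_of_le one_pos hD
  have hL3 : (0 : ℝ) < L ^ 3 := by positivity
  have hR0 : 4 * L ^ 3 * C + 4 * L ^ 3 + 4 * L * C +
      8 * ((8 * L ^ 3 + 4 * L) * (6 * D + 4)) < r := by nlinarith only [hr]
  have hLL3 : L ≤ L ^ 3 := by
    nlinarith only [mul_nonneg (mul_nonneg (sub_nonneg.2 hL) hL0.le)
      (le_of_lt (by linarith only [hL0] : (0:ℝ) < L + 1))]
  set M : ℝ := 8 * L ^ 3 + 4 * L with hMdef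
  set N : ℝ := 6 * D + 4 with hNdef
  set P : ℝ := M * N with hPdef
  have hM0 : (0 : ℝ) < M := by rw [hMdef]; positivity
  have hN0 : (0 : ℝ) < N := by rw [hNdef]; positivity
  have hP0 : (0 : ℝ) < P := mul_pos hM0 hN0
  have hR : 4 * L ^ 3 * C + 4 * L ^ 3 + 4 * L * C + 8 * P < r := hR0
  have hx1 : (0 : ℝ) ≤ 4 * L ^ 3 * C := by positivity
  have hx2 : (0 : ℝ) < 4 * L ^ 3 := by positivity
  have hx3 : (0 : ℝ) ≤ 4 * L * C := by positivity
  have hr0 : (0 : ℝ) < r := by linarith only [hR, hx1, hx2, hx3, hP0]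
  set m : ℝ := r / P with hmdef
  have hm0 : (0 : ℝ) < m := div_pos hr0 hP0
  have hmP : m * P = r := div_mul_cancel₀ _ (ne_of_gt hP0)
  have hP48 : 48 * (L ^ 3 * D) ≤ P := by
    rw [hPdef, hMdef, hNdef]; nlinarith only [mul_pos hL0 hD0, hL3, hL0, hD0]
  have hP80 : 80 * L ^ 3 ≤ P := by
    rw [hPdef, hMdef, hNdef]; nlinarith only [hL3, mul_pos hL0 hD0, hD, hL0, hD0]
  have hr8P : 8 * P < r := by linarith only [hR, hx1, hx2, hx3]
  set T : ℝ := (r / L - 2 * C - 2 * m) / L with hTdef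
  have hLT : L * T = r / L - 2 * C - 2 * m := by
    rw [hTdef]; field_simp
  have hrL : r / L ≤ r := div_le_self hr0.le hL
  have hmr : 2 * m * L ≤ r := by
    have h1 : m * (80 * L ^ 3) ≤ m * P := mul_le_mul_of_nonneg_left hP80 hm0.le
    have h2 : m * L ≤ m * L ^ 3 := mul_le_mul_of_nonneg_left hLL3 hm0.le
    linarith only [hmP, hr0.le, h1, h2]
  have hCr : 4 * L * C ≤ r := by linarith only [hR, hx1, hx2, hP0]
  have hTr : T ≤ r := by
    rw [hTdef, div_le_iff₀ hL0]
    have h9 : r ≤ r * L := le_mul_of_one_le_right hr0.le hL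
    linarith only [h9, hrL, hm0.le, hC]
  -- points of γ are 2m-far from the middle of α
  have hmid : ∀ t ∈ Set.Icc a b, ∀ s : ℝ, |s| < T → 2 * m < dist (γ t) (α s) := by
    intro t ht s hs
    have h1 := havoid t ht
    have h2 := (hα s 0).2
    rw [sub_zero] at h2
    have h3 := dist_triangle (γ t) (α s) (α 0)
    have h4 : L * |s| < L * T := mul_lt_mul_of_pos_left hs hL0
    rw [hLT] at h4
    linarith only [h1, h2, h3, h4]
  -- the set E of times near the right half of α
  set fE : X → ℝ := fun y => Metric.infDist y (α '' Set.Ici T) with hfEdef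
  set E : Set ℝ := Set.Icc a b ∩ (fE ∘ γ) ⁻¹' Set.Iic (2 * m) with hEdef
  have hfEcont : ContinuousOn (fE ∘ γ) (Set.Icc a b) :=
    (Metric.continuous_infDist_pt _).comp_continuousOn hγ
  have hEclosed : IsClosed E := hfEcont.preimage_isClosed_of_isClosed isClosed_Icc isClosed_Iic
  have hbE : b ∈ E := by
    refine ⟨⟨hab, le_refl b⟩, ?_⟩
    simp only [Set.mem_preimage, Function.comp_apply, Set.mem_Iic, hfEdef]
    rw [hγb]
    have h1 : Metric.infDist (α r) (α '' Set.Ici T) ≤ dist (α r) (α r) :=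
      Metric.infDist_le_dist_of_mem ⟨r, Set.mem_Ici.mpr hTr, rfl⟩
    rw [dist_self] at h1
    linarith only [h1, hm0]
  have hEbdd : BddBelow E := ⟨a, fun x hx => hx.1.1⟩
  set u : ℝ := sInf E with hudef
  have huE : u ∈ E := hEclosed.csInf_mem ⟨b, hbE⟩ hEbdd
  have hu_ab : u ∈ Set.Icc a b := huE.1
  -- the set F of times (before u) near the left half of α
  set fF : X → ℝ := fun y => Metric.infDist y (α '' Set.Iic (-T)) with hfFdef
  set F : Set ℝ := Set.Icc a u ∩ (fF ∘ γ) ⁻¹' Set.Iic (2 * m) with hFdef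
  have hfFcont : ContinuousOn (fF ∘ γ) (Set.Icc a u) :=
    (Metric.continuous_infDist_pt _).comp_continuousOn
      (hγ.mono (Set.Icc_subset_Icc le_rfl hu_ab.2))
  have hFclosed : IsClosed F := hfFcont.preimage_isClosed_of_isClosed isClosed_Icc isClosed_Iic
  have haF : a ∈ F := by
    refine ⟨⟨le_refl a, hu_ab.1⟩, ?_⟩
    simp only [Set.mem_preimage, Function.comp_apply, Set.mem_Iic, hfFdef]
    rw [hγa]
    have h1 : Metric.infDist (α (-r)) (α '' Set.Iic (-T)) ≤ dist (α (-r)) (α (-r)) :=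
      Metric.infDist_le_dist_of_mem ⟨-r, Set.mem_Iic.mpr (by linarith), rfl⟩
    rw [dist_self] at h1
    linarith only [h1, hm0]
  have hFbdd : BddAbove F := ⟨u, fun x hx => hx.1.2⟩
  set p : ℝ := sSup F with hpdef
  have hpF : p ∈ F := hFclosed.csSup_mem ⟨a, haF⟩ hFbdd
  have hpu : p ≤ u := hpF.1.2
  have hp_ab : p ∈ Set.Icc a b := ⟨hpF.1.1, le_trans hpu hu_ab.2⟩
  -- in the open interval (p,u), γ is 2m-far from all of α
  have hmean : ∀ t ∈ Set.Ioo p u, ∀ s : ℝ, 2 * m ≤ dist (γ t) (α s) := by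
    intro t ht s
    have ht_ab : t ∈ Set.Icc a b :=
      ⟨le_trans hp_ab.1 ht.1.le, le_trans ht.2.le hu_ab.2⟩
    by_cases hs1 : T ≤ s
    · -- t is not in E since t < u = sInf E
      have htE : t ∉ E := by
        intro htE
        exact absurd (csInf_le hEbdd htE) (not_le.mpr ht.2)
      have h2 : ¬ (fE ∘ γ) t ≤ 2 * m := fun h => htE ⟨ht_ab, h⟩
      push_neg at h2
      simp only [Function.comp_apply, hfEdef] at h2
      exact le_trans h2.le (Metric.infDist_le_dist_of_mem ⟨s, Set.mem_Ici.mpr hs1, rfl⟩)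
    · by_cases hs2 : s ≤ -T
      · have htF : t ∉ F := by
          intro htF
          exact absurd (le_csSup hFbdd htF) (not_le.mpr ht.1)
        have h2 : ¬ (fF ∘ γ) t ≤ 2 * m := fun h => htF ⟨⟨le_trans hp_ab.1 ht.1.le, ht.2.le⟩, h⟩
        push_neg at h2
        simp only [Function.comp_apply, hfFdef] at h2
        exact le_trans h2.le (Metric.infDist_le_dist_of_mem ⟨s, Set.mem_Iic.mpr hs2, rfl⟩)
      · push_neg at hs1 hs2
        exact (hmid t ht_ab s (abs_lt.mpr ⟨by linarith only [hs2], hs1⟩)).le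
  -- points α s⁻ and α s⁺ near γ p and γ u
  have hrange_ne : (α '' Set.Iic (-T)).Nonempty := ⟨α (-T), -T, Set.mem_Iic.mpr le_rfl, rfl⟩
  have hrange_ne' : (α '' Set.Ici T).Nonempty := ⟨α T, T, Set.mem_Ici.mpr le_rfl, rfl⟩
  have hpF2 : Metric.infDist (γ p) (α '' Set.Iic (-T)) < 3 * m := by
    have := hpF.2
    simp only [Set.mem_preimage, Function.comp_apply, Set.mem_Iic, hfFdef] at this
    linarith only [this, hm0]
  obtain ⟨y₁, ⟨sm, hsm, rfl⟩, hym⟩ := (Metric.infDist_lt_iff hrange_ne).mp hpF2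
  have huE2 : Metric.infDist (γ u) (α '' Set.Ici T) < 3 * m := by
    have := huE.2
    simp only [Set.mem_preimage, Function.comp_apply, Set.mem_Iic, hfEdef] at this
    linarith only [this, hm0]
  obtain ⟨y₂, ⟨sp, hsp, rfl⟩, hyp⟩ := (Metric.infDist_lt_iff hrange_ne').mp huE2
  -- quasi-geodesic lower bound between α sm and α sp
  have habs : 2 * T ≤ |sm - sp| := by
    have h1 : 2 * T ≤ sp - sm := by simp only [Set.mem_Iic, Set.mem_Ici] at hsm hsp; linarith only [hsm, hsp]
    calc 2 * T ≤ sp - sm := h1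
      _ = -(sm - sp) := by ring
      _ ≤ |sm - sp| := neg_le_abs _
  have hq2 : 2 * T / L - C ≤ dist (α sm) (α sp) := by
    have h1 := (hα sm sp).1
    have h2 : (1 / L) * (2 * T) ≤ (1 / L) * |sm - sp| :=
      mul_le_mul_of_nonneg_left habs (by positivity)
    have h3 : 2 * T / L = (1 / L) * (2 * T) := by ring
    linarith only [h1, h2, h3]
  -- π(γ p) is close to α sm, π(γ u) is close to α sp
  have hπp : dist (α sm) (π (γ p)) ≤ 3 * D * m + 2 * D := by
    have h1 := dist_triangle (α sm) (π (α sm)) (π (γ p))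
    have h2 := hπnear (α sm) ⟨sm, rfl⟩
    have h3 := hπlip (α sm) (γ p)
    have h4 : dist (α sm) (γ p) < 3 * m := by rw [dist_comm]; exact hym
    nlinarith only [h1, h2, h3, h4, hD0.le]
  have hπu : dist (π (γ u)) (α sp) ≤ 3 * D * m + 2 * D := by
    have h1 := dist_triangle (π (γ u)) (π (α sp)) (α sp)
    have h2 := hπnear (α sp) ⟨sp, rfl⟩
    have h3 := hπlip (γ u) (α sp)
    have h4 : dist (γ u) (α sp) < 3 * m := hyp
    rw [dist_comm (α sp) (π (α sp))] at h2
    nlinarith only [h1, h2, h3, h4, hD0.le]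
  have hSgeo : 2 * T / L - C - (3 * D * m + 2 * D) - (3 * D * m + 2 * D) ≤
      dist (π (γ p)) (π (γ u)) := by
    have h1 := dist_triangle4 (α sm) (π (γ p)) (π (γ u)) (α sp)
    linarith only [h1, hq2, hπp, hπu]
  -- arithmetic: the key inequality
  set n : ℕ := ⌈r / (4 * P)⌉₊ with hndef
  have hn1 : r / (4 * P) ≤ (n : ℝ) := Nat.le_ceil _
  have hn2 : (n : ℝ) < r / (4 * P) + 1 := Nat.ceil_lt_add_one (by positivity)
  set d : ℝ := r / (4 * P) with hddef
  have hd0 : (0 : ℝ) ≤ d := by positivity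
  have hd4P : d * (4 * P) = r := div_mul_cancel₀ _ (by positivity)
  have h2TL : 2 * T / L = (2 * r - 4 * C * L - 4 * m * L) / L ^ 3 := by
    rw [hTdef]; field_simp; ring
  have hmain : (d + 2) * D + C + 6 * D * m + 4 * D < (2 * r - 4 * C * L - 4 * m * L) / L ^ 3 := by
    rw [lt_div_iff₀ hL3]
    have f1 : d * (192 * (L ^ 3 * D)) ≤ r := by
      have h192 : 192 * (L ^ 3 * D) ≤ 4 * P := by linarith only [hP48]
      calc d * (192 * (L ^ 3 * D)) ≤ d * (4 * P) := mul_le_mul_of_nonneg_left h192 hd0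
        _ = r := hd4P
    have f2 : m * (48 * (L ^ 3 * D)) ≤ r := by
      calc m * (48 * (L ^ 3 * D)) ≤ m * P := mul_le_mul_of_nonneg_left hP48 hm0.le
        _ = r := hmP
    have f3 : m * (80 * L ^ 3) ≤ r := by
      calc m * (80 * L ^ 3) ≤ m * P := mul_le_mul_of_nonneg_left hP80 hm0.le
        _ = r := hmP
    have f4 : 384 * (L ^ 3 * D) < r := by linarith only [hP48, hr8P]
    have f5 : 4 * (L ^ 3 * C) < r := by linarith only [hR, hx3, hx2, hP0]
    have f6 : m * L ≤ m * L ^ 3 := mul_le_mul_of_nonneg_left hLL3 hm0.le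
    have f7 : C * L ≤ C * L ^ 3 := mul_le_mul_of_nonneg_left hLL3 hC
    have g1 : d * D * L ^ 3 ≤ r / 192 := by linarith only [f1]
    have g2 : 6 * (D * (m * L ^ 3)) ≤ r / 8 := by linarith only [f2]
    have g3 : 6 * (D * L ^ 3) < r / 64 := by linarith only [f4]
    have g4 : C * L ^ 3 < r / 4 := by linarith only [f5]
    have g5 : 4 * (C * L) < r := by linarith only [f7, f5]
    have g6 : 4 * (m * L) ≤ r / 20 := by linarith only [f6, f3]
    nlinarith only [g1, g2, g3, g4, g5, g6, hr0]
  have hkey : ((n : ℝ) + 1) * D < 2 * T / L - C - 6 * D * m - 4 * D := by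
    have h1 : ((n : ℝ) + 1) * D ≤ (d + 2) * D :=
      mul_le_mul_of_nonneg_right (by linarith only [hn2]) hD0.le
    rw [h2TL]
    linarith only [h1, hmain]
  have hkeyS : ((n : ℝ) + 1) * D < dist (π (γ p)) (π (γ u)) := by linarith only [hkey, hSgeo]
  -- p < u
  have hplt : p < u := by
    rcases lt_or_eq_of_le hpu with h | h
    · exact h
    · exfalso
      rw [h, dist_self] at hkeyS
      nlinarith only [Nat.cast_nonneg (α := ℝ) n, hD0, hkeyS]
  -- infDist lower bound on all of [p, u]
  have hICC : ∀ t ∈ Set.Icc p u, 2 * m ≤ Metric.infDist (γ t) (Set.range α) := by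
    have hIoo : ∀ t ∈ Set.Ioo p u, 2 * m ≤ Metric.infDist (γ t) (Set.range α) := by
      intro t ht
      by_contra h
      push_neg at h
      obtain ⟨y, ⟨s, rfl⟩, hy⟩ := (Metric.infDist_lt_iff ⟨α 0, Set.mem_range_self 0⟩).mp h
      exact absurd hy (not_lt.mpr (hmean t ht s))
    set G : Set ℝ := Set.Icc a b ∩
      ((fun y => Metric.infDist y (Set.range α)) ∘ γ) ⁻¹' Set.Ici (2 * m) with hGdef
    have hGclosed : IsClosed G :=
      (((Metric.continuous_infDist_pt _).comp_continuousOn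
        hγ)).preimage_isClosed_of_isClosed isClosed_Icc isClosed_Ici
    have hsub : Set.Ioo p u ⊆ G := by
      intro t ht
      exact ⟨⟨le_trans hp_ab.1 ht.1.le, le_trans ht.2.le hu_ab.2⟩, hIoo t ht⟩
    have hclos : Set.Icc p u ⊆ G := by
      have h1 := closure_mono hsub
      rw [closure_Ioo hplt.ne, hGclosed.closure_eq] at h1
      exact h1
    intro t ht
    exact (hclos ht).2
  -- apply the chain lemma
  have hchain := chain_lemma π (Set.range α) A D (2 * (A * m)) hD0.le (by positivity)
    hπlip hπcontr n γ p u hplt.le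
    (hγ.mono (Set.Icc_subset_Icc hp_ab.1 hu_ab.2))
    (fun t ht => by nlinarith only [hICC t ht, hA0]) hkeyS
  have hmono := eVariationOn.mono γ (Set.Icc_subset_Icc hp_ab.1 hu_ab.2)
  refine le_trans (le_trans ?_ hchain) hmono
  apply ENNReal.ofReal_le_ofReal
  have h1 : A / (4 * M ^ 2 * N ^ 2) * r ^ 2 = d * (A * m) := by
    rw [hddef, hmdef, hPdef]
    field_simp
  have h2 : d * (A * m) ≤ (n : ℝ) * (A * m) :=
    mul_le_mul_of_nonneg_right hn1 (by positivity)
  calc A / (4 * M ^ 2 * N ^ 2) * r ^ 2 = d * (A * m) := h1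
    _ ≤ (n : ℝ) * (A * m) := h2
    _ = (n : ℝ) * (2 * (A * m) / 2) := by ring
end

section
/- Let G and H be infinite finitely generated groups such that the Cayley graph of H has extendable geodesics (every geodesic segment from the identity extends to a longer geodesic segment). Then any two points (g₁,h₁), (g₂,h₂) on the n-sphere about the identity in the Cayley graph of G × H (with the product generating set) can be connected by a path of length at most 8n which avoids the open n-ball about the identity. Consequently, the divergence δ₁(r) of G × H satisfies δ₁(r) ≤ C₂r + C₂ for some constant C₂ ≥ 1. -/
/-- Word length of `g` with respect to the (not necessarily symmetric) generating set `S`: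
the least length of a word in `S ∪ S⁻¹` representing `g`. -/
noncomputable def wordLength {G : Type*} [Group G] (S : Set G) (g : G) : ℕ :=
  sInf {n | ∃ l : List G, (∀ x ∈ l, x ∈ S ∨ x⁻¹ ∈ S) ∧ l.prod = g ∧ l.length = n}

/-- Adjacency in the Cayley graph of `(G, S)`. -/
def CayleyAdj {G : Type*} [Group G] (S : Set G) (x y : G) : Prop :=
  ∃ s : G, (s ∈ S ∨ s⁻¹ ∈ S) ∧ y = x * s

/-- The product generating set of `G × H` coming from generating sets of the factors. -/
def prodGenSet {G H : Type*} [Group G] [Group H] (SG : Set G) (SH : Set H) :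
    Set (G × H) :=
  (fun g : G => ((g, 1) : G × H)) '' SG ∪ (fun h : H => ((1, h) : G × H)) '' SH

/-!
Since `|(g, h)| = |g| + |h|`, a point `(g, h)` of the `n`-sphere can be moved to `(g₀, 1)`, for a
fixed `g₀` on the `n`-sphere of `G` (which exists as `G` is infinite), in three stages of total
length at most `4n` without entering the open `n`-ball: extend a geodesic of `H` from `h` to some
`h'` with `|h'| = n` (possible by extendability; this costs `|g|` steps and moves away from the
ball), then move `g` to `g₀` while the `H`-coordinate stays on the `n`-sphere of `H`, and then
move `h'` to `1` while the `G`-coordinate stays on the `n`-sphere of `G`. Two points of the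
`n`-sphere are joined through `(g₀, 1)` by a path of length at most `8n`.
-/

section WordLength

variable {G G' : Type*} [Group G] [Group G'] {S : Set G}

lemma wordLength_le_length {l : List G} (hl : ∀ x ∈ l, x ∈ S ∨ x⁻¹ ∈ S) :
    wordLength S l.prod ≤ l.length :=
  Nat.sInf_le ⟨l, hl, rfl, rfl⟩

lemma exists_word_of_closure_eq_top (hS : Subgroup.closure S = ⊤) (g : G) :
    ∃ l : List G, (∀ x ∈ l, x ∈ S ∨ x⁻¹ ∈ S) ∧ l.prod = g := by
  have hg : g ∈ (Subgroup.closure S).toSubmonoid := hS ▸ Subgroup.mem_top g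
  rw [Subgroup.closure_toSubmonoid] at hg
  exact Submonoid.exists_list_of_mem_closure hg

lemma exists_geodesic_word (hS : Subgroup.closure S = ⊤) (g : G) :
    ∃ l : List G, (∀ x ∈ l, x ∈ S ∨ x⁻¹ ∈ S) ∧ l.prod = g ∧ l.length = wordLength S g := by
  obtain ⟨l, hl, hg⟩ := exists_word_of_closure_eq_top hS g
  exact Nat.sInf_mem (s := {n | ∃ l : List G, (∀ x ∈ l, x ∈ S ∨ x⁻¹ ∈ S) ∧ l.prod = g ∧
    l.length = n}) ⟨l.length, l, hl, hg, rfl⟩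

lemma wordLength_one : wordLength S (1 : G) = 0 :=
  Nat.eq_zero_of_le_zero (wordLength_le_length (l := []) (by simp))

lemma wordLength_le_one {s : G} (hs : s ∈ S ∨ s⁻¹ ∈ S) : wordLength S s ≤ 1 :=
  by simpa using wordLength_le_length (l := [s]) (by simpa using hs)

lemma wordLength_mul_le (hS : Subgroup.closure S = ⊤) (g h : G) :
    wordLength S (g * h) ≤ wordLength S g + wordLength S h := by
  obtain ⟨l₁, hl₁, rfl, hn₁⟩ := exists_geodesic_word hS g
  obtain ⟨l₂, hl₂, rfl, hn₂⟩ := exists_geodesic_word hS h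
  have := wordLength_le_length (l := l₁ ++ l₂) fun x hx => (List.mem_append.mp hx).elim (hl₁ x) (hl₂ x)
  simpa [hn₁, hn₂] using this

lemma wordLength_inv_le (hS : Subgroup.closure S = ⊤) (g : G) :
    wordLength S g⁻¹ ≤ wordLength S g := by
  obtain ⟨l, hl, rfl, hn⟩ := exists_geodesic_word hS g
  have hw : ∀ x ∈ (l.map (·⁻¹)).reverse, x ∈ S ∨ x⁻¹ ∈ S := by
    simp only [List.mem_reverse, List.mem_map]
    rintro _ ⟨y, hy, rfl⟩
    simpa [or_comm] using hl y hy
  rw [← hn, List.prod_inv_reverse]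
  simpa using wordLength_le_length hw

lemma wordLength_inv (hS : Subgroup.closure S = ⊤) (g : G) :
    wordLength S g⁻¹ = wordLength S g :=
  le_antisymm (wordLength_inv_le hS g) (by simpa using wordLength_inv_le hS g⁻¹)

lemma isWord_map {S' : Set G'} (f : G →* G') (hf : ∀ s ∈ S, f s ∈ S') {l : List G}
    (hl : ∀ x ∈ l, x ∈ S ∨ x⁻¹ ∈ S) : ∀ x ∈ l.map f, x ∈ S' ∨ x⁻¹ ∈ S' := by
  simp only [List.mem_map]
  rintro _ ⟨y, hy, rfl⟩
  rcases hl y hy with h | h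
  · exact Or.inl (hf y h)
  · exact Or.inr (by simpa using hf _ h)

lemma wordLength_map_le {S' : Set G'} (f : G →* G') (hf : ∀ s ∈ S, f s ∈ S')
    (hS : Subgroup.closure S = ⊤) (g : G) : wordLength S' (f g) ≤ wordLength S g := by
  obtain ⟨l, hl, rfl, hn⟩ := exists_geodesic_word hS g
  simpa [hn, map_list_prod] using wordLength_le_length (isWord_map f hf hl)

lemma le_wordLength_of_subadditive (hS : Subgroup.closure S = ⊤) (φ : G → ℕ)
    (hφ_one : φ 1 = 0) (hφ_mul : ∀ g h, φ (g * h) ≤ φ g + φ h)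
    (hφ_gen : ∀ s, s ∈ S ∨ s⁻¹ ∈ S → φ s ≤ 1) (g : G) : φ g ≤ wordLength S g := by
  obtain ⟨l, hl, rfl, hn⟩ := exists_geodesic_word hS g
  rw [← hn]
  clear hn
  induction l with
  | nil => simp [hφ_one]
  | cons s t ih =>
    have hs := hφ_gen s (hl s List.mem_cons_self)
    have ht := ih fun x hx => hl x (List.mem_cons_of_mem s hx)
    have := hφ_mul s t.prod
    simp only [List.prod_cons, List.length_cons]
    omega

lemma finite_setOf_wordLength_le (hfin : S.Finite) (hS : Subgroup.closure S = ⊤) (m : ℕ) :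
    {g : G | wordLength S g ≤ m}.Finite := by
  have : Finite ↥(S ∪ S⁻¹) := hfin.union hfin.inv
  refine ((List.finite_length_le ↥(S ∪ S⁻¹) m).image
    fun l => (l.map Subtype.val).prod).subset ?_
  intro g hg
  obtain ⟨l, hl, rfl, hn⟩ := exists_geodesic_word hS g
  lift l to List ↥(S ∪ S⁻¹) using hl
  refine ⟨l, ?_, rfl⟩
  show l.length ≤ m
  rwa [← List.length_map Subtype.val, hn]

lemma exists_wordLength_eq [Infinite G] (hfin : S.Finite) (hS : Subgroup.closure S = ⊤)
    (n : ℕ) : ∃ g : G, wordLength S g = n := by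
  obtain ⟨g, hg⟩ : ∃ g : G, n ≤ wordLength S g := by
    by_contra! h
    exact Set.infinite_univ ((finite_setOf_wordLength_le hfin hS n).subset
      fun g _ => (h g).le)
  obtain ⟨l, hl, rfl, hn⟩ := exists_geodesic_word hS g
  -- a prefix of a geodesic word is geodesic
  refine ⟨(l.take n).prod, le_antisymm ?_ ?_⟩
  · have := wordLength_le_length fun x (hx : x ∈ l.take n) => hl x (List.mem_of_mem_take hx)
    simp only [List.length_take] at this
    omega
  · have hdrop := wordLength_le_length fun x (hx : x ∈ l.drop n) =>
      hl x (List.mem_of_mem_drop hx)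
    have := wordLength_mul_le hS (l.take n).prod (l.drop n).prod
    rw [← List.prod_append, List.take_append_drop] at this
    simp only [List.length_drop] at hdrop
    omega

end WordLength

section CayleyGraph

variable {G : Type*} [Group G] {S : Set G} {n k k' : ℕ} {x y z : G}

lemma cayleyAdj_symm (h : CayleyAdj S x y) : CayleyAdj S y x := by
  obtain ⟨s, hs, rfl⟩ := h
  exact ⟨s⁻¹, by simpa [or_comm] using hs, by simp⟩

/-- `x` and `y` are joined by a path of at most `k` edges (a list of at most `k + 1` vertices) in
the Cayley graph of `(G, S)` which avoids the open ball of radius `n` about the identity. -/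
def JoinedOutsideBall (S : Set G) (n k : ℕ) (x y : G) : Prop :=
  ∃ l : List G, l.IsChain (CayleyAdj S) ∧ l.head? = some x ∧ l.getLast? = some y ∧
    (∀ z ∈ l, n ≤ wordLength S z) ∧ l.length ≤ k + 1

namespace JoinedOutsideBall

lemma refl (hx : n ≤ wordLength S x) : JoinedOutsideBall S n 0 x x :=
  ⟨[x], List.isChain_singleton x, rfl, rfl, by simpa using hx, le_rfl⟩

lemma of_cayleyAdj (hxy : CayleyAdj S x y) (hx : n ≤ wordLength S x)
    (hy : n ≤ wordLength S y) : JoinedOutsideBall S n 1 x y :=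
  ⟨[x, y], List.isChain_pair.mpr hxy, rfl, rfl, by simp [hx, hy], le_rfl⟩

lemma mono (h : JoinedOutsideBall S n k x y) (hk : k ≤ k') : JoinedOutsideBall S n k' x y := by
  obtain ⟨l, hc, hx, hy, hout, hl⟩ := h
  exact ⟨l, hc, hx, hy, hout, by omega⟩

lemma symm (h : JoinedOutsideBall S n k x y) : JoinedOutsideBall S n k y x := by
  obtain ⟨l, hc, hx, hy, hout, hl⟩ := h
  refine ⟨l.reverse, List.isChain_reverse.mpr (hc.imp fun _ _ => cayleyAdj_symm), ?_, ?_,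
    by simpa using hout, by simpa using hl⟩
  · rwa [List.head?_reverse]
  · rwa [List.getLast?_reverse]

lemma trans (h₁ : JoinedOutsideBall S n k x y) (h₂ : JoinedOutsideBall S n k' y z) :
    JoinedOutsideBall S n (k + k') x z := by
  obtain ⟨l₁, hc₁, hx₁, hy₁, hout₁, hl₁⟩ := h₁
  obtain ⟨l₂, hc₂, hy₂, hz₂, hout₂, hl₂⟩ := h₂
  obtain ⟨t, rfl⟩ : ∃ t, l₂ = y :: t := by
    cases l₂ with
    | nil => simp at hy₂
    | cons a t => exact ⟨t, by simpa using hy₂⟩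
  have hl₁_eq : l₁ = l₁.dropLast ++ [y] := (List.dropLast_append_getLast? y hy₁).symm
  have hne : l₁ ≠ [] := by rintro rfl; simp at hx₁
  refine ⟨l₁ ++ t, ?_, ?_, ?_, ?_, ?_⟩
  · rw [hl₁_eq] at hc₁
    have := hc₁.append_overlap hc₂ (List.cons_ne_nil y [])
    rwa [← hl₁_eq] at this
  · simpa [List.head?_append, hne] using hx₁
  · cases t with
    | nil => simpa [hy₁] using hz₂
    | cons a t' => simpa [List.getLast?_append] using hz₂
  · intro w hw
    rcases List.mem_append.mp hw with hw | hw
    exacts [hout₁ w hw, hout₂ w (List.mem_cons_of_mem y hw)]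
  · simp only [List.length_append, List.length_cons] at hl₂ ⊢
    omega

lemma of_word {w : List G} (hw : ∀ s ∈ w, s ∈ S ∨ s⁻¹ ∈ S)
    (hout : ∀ p, p <+: w → n ≤ wordLength S (x * p.prod)) :
    JoinedOutsideBall S n w.length x (x * w.prod) := by
  induction w generalizing x with
  | nil => simpa using refl (by simpa using hout [] List.nil_prefix)
  | cons s t ih =>
    have hx : n ≤ wordLength S x := by simpa using hout [] List.nil_prefix
    have hxs : n ≤ wordLength S (x * s) := by
      simpa using hout [s] (List.cons_prefix_cons.mpr ⟨rfl, List.nil_prefix⟩)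
    have hrest := ih (x := x * s) (fun r hr => hw r (List.mem_cons_of_mem s hr)) fun p hp => by
      simpa [mul_assoc] using hout (s :: p) (List.cons_prefix_cons.mpr ⟨rfl, hp⟩)
    have := (of_cayleyAdj ⟨s, hw s List.mem_cons_self, rfl⟩ hx hxs).trans hrest
    simpa [add_comm, mul_assoc] using this

lemma of_word_mem_subgroup {K : Subgroup G} {w : List G} (hw : ∀ s ∈ w, s ∈ S ∨ s⁻¹ ∈ S)
    (hwK : ∀ s ∈ w, s ∈ K) (hK : ∀ b ∈ K, n ≤ wordLength S (x * b)) :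
    JoinedOutsideBall S n w.length x (x * w.prod) :=
  of_word hw fun _ hp => hK _ (K.list_prod_mem fun s hs => hwK s (hp.subset hs))

lemma of_le_wordLength_mul (hS : Subgroup.closure S = ⊤) {a : G}
    (ha : n + wordLength S a ≤ wordLength S (x * a)) :
    JoinedOutsideBall S n (wordLength S a) x (x * a) := by
  obtain ⟨w, hw, rfl, hlen⟩ := exists_geodesic_word hS a
  rw [← hlen]
  -- every point of a geodesic from `x` to `x * a` lies within `|a|` of `x * a`
  refine of_word hw fun p ⟨q, hpq⟩ => ?_
  have hq := wordLength_le_length fun s (hs : s ∈ q) => hw s (hpq ▸ List.mem_append_right p hs)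
  have := wordLength_mul_le hS (x * p.prod) q.prod
  rw [mul_assoc, ← List.prod_append, hpq] at this
  have : q.length ≤ w.length := by simp [← hpq]
  omega

end JoinedOutsideBall

end CayleyGraph

section Product

variable {G H : Type*} [Group G] [Group H] {SG : Set G} {SH : Set H} {n : ℕ}

lemma closure_prodGenSet (hG : Subgroup.closure SG = ⊤) (hH : Subgroup.closure SH = ⊤) :
    Subgroup.closure (prodGenSet SG SH) = ⊤ := by
  have hinl : (MonoidHom.inl G H).range ≤ Subgroup.closure (prodGenSet SG SH) := by
    rw [MonoidHom.range_eq_map, ← hG, MonoidHom.map_closure]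
    exact Subgroup.closure_mono Set.subset_union_left
  have hinr : (MonoidHom.inr G H).range ≤ Subgroup.closure (prodGenSet SG SH) := by
    rw [MonoidHom.range_eq_map, ← hH, MonoidHom.map_closure]
    exact Subgroup.closure_mono Set.subset_union_right
  refine eq_top_iff.mpr fun ⟨g, h⟩ _ => ?_
  have : ((g, h) : G × H) = MonoidHom.inl G H g * MonoidHom.inr G H h := by simp
  rw [this]
  exact mul_mem (hinl ⟨g, rfl⟩) (hinr ⟨h, rfl⟩)

lemma wordLength_prodGenSet (hG : Subgroup.closure SG = ⊤) (hH : Subgroup.closure SH = ⊤)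
    (g : G) (h : H) :
    wordLength (prodGenSet SG SH) (g, h) = wordLength SG g + wordLength SH h := by
  have hP := closure_prodGenSet hG hH
  apply le_antisymm
  · calc wordLength (prodGenSet SG SH) (g, h)
        = wordLength (prodGenSet SG SH) (MonoidHom.inl G H g * MonoidHom.inr G H h) := by simp
      _ ≤ wordLength (prodGenSet SG SH) (MonoidHom.inl G H g) +
          wordLength (prodGenSet SG SH) (MonoidHom.inr G H h) := wordLength_mul_le hP _ _
      _ ≤ wordLength SG g + wordLength SH h := add_le_add
          (wordLength_map_le (MonoidHom.inl G H) (fun s hs => Or.inl ⟨s, hs, rfl⟩) hG g)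
          (wordLength_map_le (MonoidHom.inr G H) (fun s hs => Or.inr ⟨s, hs, rfl⟩) hH h)
  · refine le_wordLength_of_subadditive hP (fun x => wordLength SG x.1 + wordLength SH x.2)
      (by simp [wordLength_one]) (fun x y => ?_) (fun x hx => ?_) (g, h)
    · have := wordLength_mul_le hG x.1 y.1
      have := wordLength_mul_le hH x.2 y.2
      simp only [Prod.fst_mul, Prod.snd_mul]
      omega
    · wlog hx' : x ∈ prodGenSet SG SH generalizing x
      · simpa [wordLength_inv hG, wordLength_inv hH] using
          this x⁻¹ (by simpa [or_comm] using hx) (hx.resolve_left hx')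
      rcases hx' with ⟨s, hs, rfl⟩ | ⟨s, hs, rfl⟩
      · simpa [wordLength_one] using wordLength_le_one (Or.inl hs)
      · simpa [wordLength_one] using wordLength_le_one (Or.inl hs)

lemma JoinedOutsideBall.prodGenSet_fst (hG : Subgroup.closure SG = ⊤)
    (hH : Subgroup.closure SH = ⊤) {h : H} (hh : n ≤ wordLength SH h) (g a : G) :
    JoinedOutsideBall (prodGenSet SG SH) n (wordLength SG a) (g, h) (g * a, h) := by
  obtain ⟨w, hw, rfl, hlen⟩ := exists_geodesic_word hG a
  have hwP := isWord_map (S' := prodGenSet SG SH) (MonoidHom.inl G H)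
    (fun s hs => Or.inl ⟨s, hs, rfl⟩) hw
  have hK : ∀ b ∈ (MonoidHom.inl G H).range, n ≤ wordLength (prodGenSet SG SH) ((g, h) * b) := by
    rintro _ ⟨c, rfl⟩
    simp only [MonoidHom.inl_apply, Prod.mk_mul_mk, mul_one, wordLength_prodGenSet hG hH]
    omega
  simpa [← hlen, ← map_list_prod] using JoinedOutsideBall.of_word_mem_subgroup hwP (by simp) hK

lemma JoinedOutsideBall.prodGenSet_snd (hG : Subgroup.closure SG = ⊤)
    (hH : Subgroup.closure SH = ⊤) {g : G} (hg : n ≤ wordLength SG g) (h a : H) :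
    JoinedOutsideBall (prodGenSet SG SH) n (wordLength SH a) (g, h) (g, h * a) := by
  obtain ⟨w, hw, rfl, hlen⟩ := exists_geodesic_word hH a
  have hwP := isWord_map (S' := prodGenSet SG SH) (MonoidHom.inr G H)
    (fun s hs => Or.inr ⟨s, hs, rfl⟩) hw
  have hK : ∀ b ∈ (MonoidHom.inr G H).range, n ≤ wordLength (prodGenSet SG SH) ((g, h) * b) := by
    rintro _ ⟨c, rfl⟩
    simp only [MonoidHom.inr_apply, Prod.mk_mul_mk, mul_one, wordLength_prodGenSet hG hH]
    omega
  simpa [← hlen, ← map_list_prod] using JoinedOutsideBall.of_word_mem_subgroup hwP (by simp) hK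

lemma JoinedOutsideBall.prodGenSet_mk_one (hG : Subgroup.closure SG = ⊤)
    (hH : Subgroup.closure SH = ⊤)
    (hext : ∀ (h : H) (n : ℕ), wordLength SH h ≤ n →
      ∃ k : H, wordLength SH (h * k) = n ∧ wordLength SH h + wordLength SH k = n)
    {g g₀ : G} {h : H} (hgh : wordLength SG g + wordLength SH h = n)
    (hg₀ : wordLength SG g₀ = n) :
    JoinedOutsideBall (prodGenSet SG SH) n (4 * n) (g, h) (g₀, 1) := by
  obtain ⟨k, hk, hk_len⟩ := hext h n (by omega)
  have h₁ : JoinedOutsideBall (prodGenSet SG SH) n (wordLength SH k) (g, h) (g, h * k) := by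
    have := JoinedOutsideBall.of_le_wordLength_mul (closure_prodGenSet hG hH)
      (n := n) (x := (g, h)) (a := ((1 : G), k))
      (by simp only [Prod.mk_mul_mk, mul_one, wordLength_prodGenSet hG hH, wordLength_one]; omega)
    simpa [wordLength_prodGenSet hG hH, wordLength_one] using this
  have h₂ := JoinedOutsideBall.prodGenSet_fst hG hH hk.ge g (g⁻¹ * g₀)
  have h₃ := JoinedOutsideBall.prodGenSet_snd hG hH hg₀.ge (h * k) (h * k)⁻¹
  simp only [mul_inv_cancel_left, mul_inv_cancel] at h₂ h₃
  refine ((h₁.trans h₂).trans h₃).mono ?_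
  have := wordLength_mul_le hG g⁻¹ g₀
  rw [wordLength_inv hG] at this
  rw [wordLength_inv hH, hk]
  omega

end Product

theorem product_divergence_linear_general {G H : Type*} [Group G] [Group H]
    [Infinite G]
    (SG : Set G) (SH : Set H) (hSGfin : SG.Finite)
    (hgenG : Subgroup.closure SG = ⊤) (hgenH : Subgroup.closure SH = ⊤)
    (hext : ∀ (h : H) (n : ℕ), wordLength SH h ≤ n →
      ∃ k : H, wordLength SH (h * k) = n ∧ wordLength SH h + wordLength SH k = n) :
    (∀ n : ℕ, 0 < n → ∀ (g₁ g₂ : G) (h₁ h₂ : H),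
      wordLength (prodGenSet SG SH) (g₁, h₁) = n →
      wordLength (prodGenSet SG SH) (g₂, h₂) = n →
      ∃ l : List (G × H), l.Chain' (CayleyAdj (prodGenSet SG SH)) ∧
        l.head? = some (g₁, h₁) ∧ l.getLast? = some (g₂, h₂) ∧
        (∀ x ∈ l, n ≤ wordLength (prodGenSet SG SH) x) ∧
        l.length ≤ 8 * n + 1) ∧
    (∃ C₂ : ℝ, 1 ≤ C₂ ∧ ∀ n : ℕ, 0 < n → ∀ (g₁ g₂ : G) (h₁ h₂ : H),
      wordLength (prodGenSet SG SH) (g₁, h₁) = n →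
      wordLength (prodGenSet SG SH) (g₂, h₂) = n →
      ∃ l : List (G × H), l.Chain' (CayleyAdj (prodGenSet SG SH)) ∧
        l.head? = some (g₁, h₁) ∧ l.getLast? = some (g₂, h₂) ∧
        (∀ x ∈ l, n ≤ wordLength (prodGenSet SG SH) x) ∧
        ((l.length : ℝ) - 1 ≤ C₂ * n + C₂)) := by
  have hpath : ∀ n : ℕ, ∀ (g₁ g₂ : G) (h₁ h₂ : H),
      wordLength (prodGenSet SG SH) (g₁, h₁) = n → wordLength (prodGenSet SG SH) (g₂, h₂) = n →
      JoinedOutsideBall (prodGenSet SG SH) n (8 * n) (g₁, h₁) (g₂, h₂) := by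
    intro n g₁ g₂ h₁ h₂ hn₁ hn₂
    rw [wordLength_prodGenSet hgenG hgenH] at hn₁ hn₂
    obtain ⟨g₀, hg₀⟩ := exists_wordLength_eq hSGfin hgenG n
    have := (JoinedOutsideBall.prodGenSet_mk_one hgenG hgenH hext hn₁ hg₀).trans
      (JoinedOutsideBall.prodGenSet_mk_one hgenG hgenH hext hn₂ hg₀).symm
    exact this.mono (by omega)
  refine ⟨fun n _ g₁ g₂ h₁ h₂ hn₁ hn₂ => hpath n g₁ g₂ h₁ h₂ hn₁ hn₂, 8, by norm_num,
    fun n _ g₁ g₂ h₁ h₂ hn₁ hn₂ => ?_⟩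
  obtain ⟨l, hc, hx, hy, hout, hl⟩ := hpath n g₁ g₂ h₁ h₂ hn₁ hn₂
  refine ⟨l, hc, hx, hy, hout, ?_⟩
  have : (l.length : ℝ) ≤ 8 * n + 1 := by exact_mod_cast hl
  linarith

/-- For infinite f.g. groups `G`, `H` with `H` having extendable geodesics, any two points
on the `n`-sphere of `G × H` are joined by a path of length at most `8n` avoiding the open
`n`-ball about the identity; consequently the divergence `δ₁` of `G × H` is linear. -/
theorem product_divergence_linear {G H : Type*} [Group G] [Group H]
    [Infinite G] [Infinite H]
    (SG : Set G) (SH : Set H) (hSGfin : SG.Finite) (hSHfin : SH.Finite)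
    (hgenG : Subgroup.closure SG = ⊤) (hgenH : Subgroup.closure SH = ⊤)
    (hext : ∀ (h : H) (n : ℕ), wordLength SH h ≤ n →
      ∃ k : H, wordLength SH (h * k) = n ∧ wordLength SH h + wordLength SH k = n) :
    (∀ n : ℕ, 0 < n → ∀ (g₁ g₂ : G) (h₁ h₂ : H),
      wordLength (prodGenSet SG SH) (g₁, h₁) = n →
      wordLength (prodGenSet SG SH) (g₂, h₂) = n →
      ∃ l : List (G × H), l.Chain' (CayleyAdj (prodGenSet SG SH)) ∧
        l.head? = some (g₁, h₁) ∧ l.getLast? = some (g₂, h₂) ∧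
        (∀ x ∈ l, n ≤ wordLength (prodGenSet SG SH) x) ∧
        l.length ≤ 8 * n + 1) ∧
    (∃ C₂ : ℝ, 1 ≤ C₂ ∧ ∀ n : ℕ, 0 < n → ∀ (g₁ g₂ : G) (h₁ h₂ : H),
      wordLength (prodGenSet SG SH) (g₁, h₁) = n →
      wordLength (prodGenSet SG SH) (g₂, h₂) = n →
      ∃ l : List (G × H), l.Chain' (CayleyAdj (prodGenSet SG SH)) ∧
        l.head? = some (g₁, h₁) ∧ l.getLast? = some (g₂, h₂) ∧
        (∀ x ∈ l, n ≤ wordLength (prodGenSet SG SH) x) ∧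
        ((l.length : ℝ) - 1 ≤ C₂ * n + C₂)) :=
  product_divergence_linear_general SG SH hSGfin hgenG hgenH hext
end

section
/- For integers p > q ≥ 2 and m ≥ 3, the function r^{m−1}·r^{log_p(q)} = r^{m−1+log_p(q)} lies strictly between r^{m−1} and r^m in the domination order: r^{m−1} ≼ r^{m−1+log_p(q)}, r^{m−1+log_p(q)} ≼ r^m, but r^{m−1+log_p(q)} is not ≼ r^{m−1} and r^m is not ≼ r^{m−1+log_p(q)}. Moreover, the set {m − 1 + log_p(q) : m ≥ 3, p > q ≥ 2 integers} is dense in [2, ∞). -/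
/-- Gersten's domination relation: `f ≼ g` iff there are positive constants `A, B, C` with
`f(x) ≤ g(Ax) + Bx` for all `x > C`. -/
def Dominated (f g : ℝ → ℝ) : Prop :=
  ∃ A B C : ℝ, 0 < A ∧ 0 < B ∧ 0 < C ∧ ∀ x : ℝ, C < x → f x ≤ g (A * x) + B * x

lemma dom_of_le {a b : ℝ} (h : a ≤ b) :
    Dominated (fun r : ℝ => r ^ a) (fun r : ℝ => r ^ b) := by
  refine ⟨1, 1, 1, one_pos, one_pos, one_pos, fun x hx => ?_⟩
  simp only [one_mul]
  have h1 : x ^ a ≤ x ^ b := Real.rpow_le_rpow_of_exponent_le hx.le h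
  nlinarith [h1, hx]

lemma not_dom_of_lt {a b : ℝ} (ha1 : 1 ≤ a) (hab : a < b) :
    ¬ Dominated (fun r : ℝ => r ^ b) (fun r : ℝ => r ^ a) := by
  rintro ⟨A, B, C, hA, hB, hC, h⟩
  have hd : 0 < b - a := by linarith
  have hev : ∀ᶠ x : ℝ in Filter.atTop, (A ^ a + B < x ^ (b - a)) ∧ C < x ∧ 1 < x := by
    refine (((tendsto_rpow_atTop hd).eventually_gt_atTop (A ^ a + B)).and
      ((Filter.eventually_gt_atTop C).and (Filter.eventually_gt_atTop 1)))
  obtain ⟨x, hx1, hxC, hx2⟩ := hev.exists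
  have hxpos : (0:ℝ) < x := by linarith
  have hkey := h x hxC
  have e1 : (A * x) ^ a = A ^ a * x ^ a := Real.mul_rpow hA.le hxpos.le
  have e2 : B * x ≤ B * x ^ a := by
    have : x ≤ x ^ a := by
      calc x = x ^ (1:ℝ) := (Real.rpow_one x).symm
      _ ≤ x ^ a := Real.rpow_le_rpow_of_exponent_le hx2.le ha1
    nlinarith
  have e3 : x ^ b = x ^ (b - a) * x ^ a := by
    rw [← Real.rpow_add hxpos]; ring_nf
  have hxa : 0 < x ^ a := Real.rpow_pos_of_pos hxpos a
  have : x ^ b > A ^ a * x ^ a + B * x ^ a := by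
    rw [e3]; nlinarith
  simp only at hkey
  nlinarith [hkey, e1, e2]

/-- For integers `p > q ≥ 2` and `m ≥ 3`, the exponent `α = m - 1 + log_p q` gives a
function `r^α` lying strictly between `r^{m-1}` and `r^m` in the domination order, and the
set of such exponents is dense in `[2, ∞)`. -/
theorem snowflake_exponents :
    (∀ m p q : ℕ, 3 ≤ m → 2 ≤ q → q < p →
      Dominated (fun r : ℝ => r ^ ((m : ℝ) - 1))
        (fun r : ℝ => r ^ ((m : ℝ) - 1 + Real.log q / Real.log p)) ∧
      Dominated (fun r : ℝ => r ^ ((m : ℝ) - 1 + Real.log q / Real.log p))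
        (fun r : ℝ => r ^ (m : ℝ)) ∧
      ¬ Dominated (fun r : ℝ => r ^ ((m : ℝ) - 1 + Real.log q / Real.log p))
        (fun r : ℝ => r ^ ((m : ℝ) - 1)) ∧
      ¬ Dominated (fun r : ℝ => r ^ (m : ℝ))
        (fun r : ℝ => r ^ ((m : ℝ) - 1 + Real.log q / Real.log p))) ∧
    (∀ x : ℝ, 2 ≤ x → ∀ ε : ℝ, 0 < ε → ∃ m p q : ℕ, 3 ≤ m ∧ 2 ≤ q ∧ q < p ∧
      |x - ((m : ℝ) - 1 + Real.log q / Real.log p)| < ε) := by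
  constructor
  · intro m p q hm hq hqp
    have hq1 : (1:ℝ) < (q:ℝ) := by exact_mod_cast lt_of_lt_of_le one_lt_two hq
    have hp1 : (1:ℝ) < (p:ℝ) := lt_trans hq1 (by exact_mod_cast hqp)
    have hlq : 0 < Real.log q := Real.log_pos hq1
    have hlp : 0 < Real.log p := Real.log_pos hp1
    have hlt : Real.log q < Real.log p :=
      Real.log_lt_log (by linarith) (by exact_mod_cast hqp)
    have ht0 : 0 < Real.log q / Real.log p := div_pos hlq hlp
    have ht1 : Real.log q / Real.log p < 1 := (div_lt_one hlp).mpr hlt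
    have hm3 : (3:ℝ) ≤ (m:ℝ) := by exact_mod_cast hm
    refine ⟨dom_of_le (by linarith), dom_of_le (by linarith),
      not_dom_of_lt (by linarith) (by linarith),
      not_dom_of_lt (by linarith) (by linarith)⟩
  · intro x hx ε hε
    set m : ℕ := ⌊x⌋.toNat + 1 with hm
    have hfl : (2:ℤ) ≤ ⌊x⌋ := by
      have := Int.le_floor.mpr (by exact_mod_cast hx : ((2:ℤ):ℝ) ≤ x)
      exact this
    have hmr : ((m:ℝ) - 1) = (⌊x⌋ : ℝ) := by
      have : ((⌊x⌋.toNat : ℤ) : ℝ) = ((⌊x⌋ : ℤ) : ℝ) := by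
        congr 1; exact Int.toNat_of_nonneg (by linarith)
      push_cast [hm]
      push_cast at this
      linarith
    have hfrac0 : 0 ≤ x - (⌊x⌋:ℝ) := by linarith [Int.floor_le x]
    have hfrac1 : x - (⌊x⌋:ℝ) < 1 := by linarith [Int.lt_floor_add_one x]
    obtain ⟨r, hr1, hr2⟩ := exists_rat_btwn
      (show x - (⌊x⌋:ℝ) < min (x - (⌊x⌋:ℝ) + ε) 1 by
        simp [lt_min_iff]; exact ⟨hε, hfrac1⟩)
    have hr0 : (0:ℝ) < (r:ℝ) := lt_of_le_of_lt hfrac0 hr1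
    have hrlt1 : (r:ℝ) < 1 := lt_of_lt_of_le hr2 (min_le_right _ _)
    have hrq0 : 0 < r := by exact_mod_cast hr0
    have hrq1 : r < 1 := by exact_mod_cast hrlt1
    set k : ℕ := r.num.toNat with hk
    set n : ℕ := r.den with hn
    have hk1 : 1 ≤ k := by
      have : 0 < r.num := Rat.num_pos.mpr hrq0
      omega
    have hrval : (r:ℝ) = (k:ℝ) / (n:ℝ) := by
      rw [Rat.cast_def]
      congr 1
      · rw [hk]
        exact_mod_cast (Int.toNat_of_nonneg (le_of_lt (Rat.num_pos.mpr hrq0))).symm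
    have hkn : k < n := by
      have hnpos : (0:ℝ) < (n:ℝ) := by
        have : 0 < r.den := r.pos
        exact_mod_cast this
      have : (k:ℝ) < (n:ℝ) := by
        rw [hrval] at hrlt1
        exact lt_of_lt_of_le (by nlinarith [(div_lt_one hnpos).mp hrlt1]) le_rfl
      exact_mod_cast this
    refine ⟨m, 2 ^ n, 2 ^ k, ?_, ?_, ?_, ?_⟩
    · omega
    · calc 2 = 2 ^ 1 := (pow_one 2).symm
      _ ≤ 2 ^ k := Nat.pow_le_pow_right (by norm_num) hk1
    · exact Nat.pow_lt_pow_right (by norm_num) hkn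
    · have hlog : Real.log ((2:ℕ) ^ k : ℕ) / Real.log ((2:ℕ) ^ n : ℕ) = (r:ℝ) := by
        push_cast
        rw [Real.log_pow, Real.log_pow, hrval]
        have h2 : Real.log 2 ≠ 0 := ne_of_gt (Real.log_pos one_lt_two)
        field_simp
      rw [hlog, hmr]
      rw [abs_sub_lt_iff]
      constructor
      · linarith
      · have := lt_of_lt_of_le hr2 (min_le_left _ _)
        linarith
end

section
/- Let X be a geodesic metric space and α : ℝ → X an (L,C)-quasi-geodesic. Suppose γ is a path outside the open ball B(α(0), r/L − C) connecting α(−r) to α(r), with r > 4L³(C+1) + 4LC, and suppose γ lies entirely within the closed 2s-neighborhood of im α where s = r/((8L³+4L)(6D+4)) for some D ≥ 1. Then there is a point x_p on γ with d(x_p, α(0)) < r/L − C, a contradiction; hence γ cannot lie in the 2s-neighborhood of im α. -/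
/-- Parameter distance bound coming from the lower quasi-geodesic inequality. -/
lemma qg_param_bound {X : Type*} [MetricSpace X] {L C : ℝ} (hL : 0 < L)
    {α : ℝ → X} (h : IsQuasiGeodesic L C α) (u v : ℝ) :
    |u - v| ≤ L * (dist (α u) (α v) + C) := by
  have h1 := (h u v).1
  have h3 : L * (1 / L * |u - v|) = |u - v| := by field_simp
  nlinarith [mul_le_mul_of_nonneg_left h1 hL.le]

set_option maxHeartbeats 1000000 in
/-- A path `γ` from `α(-r)` to `α(r)` avoiding the open ball `B(α 0, r/L - C)`, with
`r > 4L³(C+1) + 4LC`, cannot lie entirely within the closed `2s`-neighborhood of `im α`,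
where `s = r/((8L³+4L)(6D+4))` and `D ≥ 1`. -/
theorem avoidant_path_escapes_neighborhood {X : Type*} [MetricSpace X]
    (hgeo : GeodesicSpace X) (L C D r s : ℝ) (hL : 1 ≤ L) (hC : 0 ≤ C) (hD : 1 ≤ D)
    (hr : 4 * L ^ 3 * (C + 1) + 4 * L * C < r)
    (hs : s = r / ((8 * L ^ 3 + 4 * L) * (6 * D + 4)))
    (α : ℝ → X) (hα : IsQuasiGeodesic L C α)
    (a b : ℝ) (hab : a ≤ b) (γ : ℝ → X) (hγcont : ContinuousOn γ (Set.Icc a b))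
    (hγa : γ a = α (-r)) (hγb : γ b = α r)
    (hγavoid : ∀ t ∈ Set.Icc a b, r / L - C ≤ dist (γ t) (α 0)) :
    ¬ ∀ t ∈ Set.Icc a b, Metric.infDist (γ t) (Set.range α) ≤ 2 * s := by
  classical
  intro hcl
  have hL0 : 0 < L := by linarith
  have hL3 : (0:ℝ) < L ^ 3 := pow_pos hL0 3
  have hr0 : 0 < r := by nlinarith [mul_nonneg hL3.le hC, mul_nonneg hL0.le hC]
  have hden : 0 < (8 * L ^ 3 + 4 * L) * (6 * D + 4) := by nlinarith
  have hs0 : 0 < s := by rw [hs]; exact div_pos hr0 hden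
  have hseq : s * ((8 * L ^ 3 + 4 * L) * (6 * D + 4)) = r := by
    rw [hs]; field_simp
  -- key numeric bound: 80 L³ s + 40 L s ≤ r
  have hkey : 80 * L ^ 3 * s + 40 * L * s ≤ r := by
    nlinarith [mul_nonneg (mul_nonneg hs0.le (by nlinarith : (0:ℝ) ≤ 8 * L ^ 3 + 4 * L))
      (by linarith : (0:ℝ) ≤ 6 * D - 6)]
  -- uniform continuity: get δ for ε = 1
  obtain ⟨δ, hδ0, hδ⟩ := (Metric.uniformContinuousOn_iff.mp
    (isCompact_Icc.uniformContinuousOn_of_continuous hγcont)) 1 one_pos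
  obtain ⟨m, hm⟩ := exists_nat_gt ((b - a) / δ)
  set n : ℕ := m + 1 with hn
  have hnpos : 0 < (n : ℝ) := by positivity
  have h_ba : 0 ≤ b - a := by linarith
  have hstep : (b - a) / n < δ := by
    rw [div_lt_iff₀ hnpos]
    have hm' : (b - a) / δ < (n : ℝ) := by
      have : (m : ℝ) ≤ (n : ℝ) := by exact_mod_cast Nat.le_succ m
      linarith
    calc b - a = ((b - a) / δ) * δ := by field_simp
      _ < (n : ℝ) * δ := by exact mul_lt_mul_of_pos_right hm' hδ0
      _ = δ * n := mul_comm _ _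
  set t : ℕ → ℝ := fun i => a + i * ((b - a) / n) with htdef
  have hstep0 : 0 ≤ (b - a) / n := div_nonneg h_ba hnpos.le
  have ht_mem : ∀ i : ℕ, i ≤ n → t i ∈ Set.Icc a b := by
    intro i hi
    constructor
    · have : 0 ≤ (i : ℝ) * ((b - a) / n) := mul_nonneg (Nat.cast_nonneg i) hstep0
      simp only [htdef]; linarith
    · have hi' : (i : ℝ) ≤ (n : ℝ) := by exact_mod_cast hi
      have h1 : (i : ℝ) * ((b - a) / n) ≤ (n : ℝ) * ((b - a) / n) :=
        mul_le_mul_of_nonneg_right hi' hstep0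
      have h2 : (n : ℝ) * ((b - a) / n) = b - a := by field_simp
      simp only [htdef]; linarith
  have ht0 : t 0 = a := by simp [htdef]
  have htn : t n = b := by
    have h2 : (n : ℝ) * ((b - a) / n) = b - a := by field_simp
    simp only [htdef, h2]; ring
  -- choose approximating parameters on α
  have hexists : ∀ i : ℕ, ∃ w : ℝ, i ≤ n → dist (γ (t i)) (α w) < 3 * s := by
    intro i
    by_cases hi : i ≤ n
    · have h1 : Metric.infDist (γ (t i)) (Set.range α) < 3 * s :=
        lt_of_le_of_lt (hcl (t i) (ht_mem i hi)) (by linarith)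
      obtain ⟨y, ⟨w, rfl⟩, hy⟩ := (Metric.infDist_lt_iff (Set.range_nonempty α)).mp h1
      exact ⟨w, fun _ => hy⟩
    · exact ⟨0, fun h => absurd h hi⟩
  choose u hu using hexists
  have hu0 : dist (α (-r)) (α (u 0)) < 3 * s := by
    have := hu 0 (Nat.zero_le n); rwa [ht0, hγa] at this
  have hun : dist (α r) (α (u n)) < 3 * s := by
    have := hu n le_rfl; rwa [htn, hγb] at this
  -- u 0 < 0 and 0 < u n
  have hu0neg : u 0 < 0 := by
    have hb := qg_param_bound hL0 hα (-r) (u 0)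
    have habs : |(-r) - u 0| < L * (3 * s + C) :=
      lt_of_le_of_lt hb (mul_lt_mul_of_pos_left (by linarith) hL0)
    have h1 := (abs_lt.mp habs).1
    nlinarith [mul_nonneg hL3.le hs0.le, mul_nonneg hL0.le hs0.le,
      mul_nonneg hL3.le hC, mul_nonneg hL0.le hC]
  have hunpos : 0 < u n := by
    have hb := qg_param_bound hL0 hα r (u n)
    have habs : |r - u n| < L * (3 * s + C) :=
      lt_of_le_of_lt hb (mul_lt_mul_of_pos_left (by linarith) hL0)
    have h1 := (abs_lt.mp habs).2
    nlinarith [mul_nonneg hL3.le hs0.le, mul_nonneg hL0.le hs0.le,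
      mul_nonneg hL3.le hC, mul_nonneg hL0.le hC]
  -- first index with nonnegative parameter
  have hex : ∃ k, 0 ≤ u k := ⟨n, hunpos.le⟩
  have hp0 : 0 ≤ u (Nat.find hex) := Nat.find_spec hex
  obtain ⟨q, hq⟩ : ∃ q, Nat.find hex = q + 1 := by
    refine Nat.exists_eq_succ_of_ne_zero ?_
    intro h; rw [h] at hp0; linarith
  rw [hq] at hp0
  have hqneg : u q < 0 := by
    have hlt : q < Nat.find hex := by omega
    exact not_le.mp (Nat.find_min hex hlt)
  have hqn : q + 1 ≤ n := by
    have := Nat.find_min' hex hunpos.le; omega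
  -- consecutive points of γ are close
  have hdistt : dist (t q) (t (q + 1)) < δ := by
    have hdiff : t q - t (q + 1) = -((b - a) / n) := by
      simp only [htdef]; push_cast; ring
    rw [Real.dist_eq, hdiff, abs_neg, abs_of_nonneg hstep0]
    exact hstep
  have hγstep : dist (γ (t q)) (γ (t (q + 1))) < 1 :=
    hδ (t q) (ht_mem q (by omega)) (t (q + 1)) (ht_mem (q + 1) hqn) hdistt
  have h1 := hu q (by omega)
  have h2 := hu (q + 1) hqn
  have hd4 : dist (α (u q)) (α (u (q + 1))) < 6 * s + 1 := by
    have htri := dist_triangle4 (α (u q)) (γ (t q)) (γ (t (q + 1))) (α (u (q + 1)))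
    have hcomm := dist_comm (α (u q)) (γ (t q))
    linarith
  have hq2 : |u q - u (q + 1)| < L * (6 * s + 1 + C) :=
    lt_of_le_of_lt (qg_param_bound hL0 hα _ _)
      (mul_lt_mul_of_pos_left (by linarith) hL0)
  have hup : u (q + 1) < L * (6 * s + 1 + C) := by
    have := (abs_lt.mp hq2).1
    linarith
  have hupα : dist (α (u (q + 1))) (α 0) ≤ L * (u (q + 1)) + C := by
    have h3 := (hα (u (q + 1)) 0).2
    rwa [sub_zero, abs_of_nonneg hp0] at h3
  have havoid := hγavoid (t (q + 1)) (ht_mem (q + 1) hqn)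
  have hLu : L * u (q + 1) < L * (L * (6 * s + 1 + C)) :=
    mul_lt_mul_of_pos_left hup hL0
  have hfin : r / L - C < 3 * s + (L * (L * (6 * s + 1 + C)) + C) := by
    have htri := dist_triangle (γ (t (q + 1))) (α (u (q + 1))) (α 0)
    linarith
  have hrlt : r < L * (3 * s + L * (L * (6 * s + 1 + C)) + 2 * C) := by
    have h4 : r / L < 3 * s + L * (L * (6 * s + 1 + C)) + 2 * C := by linarith
    calc r = (r / L) * L := by field_simp
      _ < (3 * s + L * (L * (6 * s + 1 + C)) + 2 * C) * L :=
        mul_lt_mul_of_pos_right h4 hL0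
      _ = L * (3 * s + L * (L * (6 * s + 1 + C)) + 2 * C) := mul_comm _ _
  nlinarith [mul_nonneg hL3.le hs0.le, mul_nonneg hL0.le hs0.le,
    mul_nonneg hL3.le hC, mul_nonneg hL0.le hC, hr0]
end
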